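/- arXiv:1610.08892 — 2 statements merged into one kernel-verified Lean document; each statement's English description precedes it below -/
import Mathlib

section
/- Let Ω ⊂ ℝ² be open, u ∈ C²(Ω), and let γ : I → Ω be a C² curve parametrized by arc length with u(γ(s)) = 0 for all s ∈ I. Set ν(s) := Jγ'(s) (J the counterclockwise rotation by π/2) and κ(s) := ⟨γ''(s), ν(s)⟩. Let g be a C¹ function on a neighborhood of the unit circle 𝕊¹ ⊂ ℝ² such that ⟨Du(γ(s)), ν(s)⟩ = g(ν(s)) for all s ∈ I. Then D²u_{γ(s)}(γ'(s), ν(s)) = −κ(s) · ⟨Dg(ν(s)), γ'(s)⟩ for all s ∈ I. -/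
open Set

/-- Partial derivative in the `x` direction. -/
noncomputable def px (u : ℝ × ℝ → ℝ) (p : ℝ × ℝ) : ℝ := fderiv ℝ u p (1, 0)

/-- Partial derivative in the `y` direction. -/
noncomputable def py (u : ℝ × ℝ → ℝ) (p : ℝ × ℝ) : ℝ := fderiv ℝ u p (0, 1)

/-- The gradient `Du = (u_x, u_y)`. -/
noncomputable def grad (u : ℝ × ℝ → ℝ) (p : ℝ × ℝ) : ℝ × ℝ := (px u p, py u p)

/-- The Hessian `D²u_p(v, w)` as a bilinear form. -/
noncomputable def hess (u : ℝ × ℝ → ℝ) (v w : ℝ × ℝ) (p : ℝ × ℝ) : ℝ :=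
  fderiv ℝ (fun q => fderiv ℝ u q v) p w

/-- The determinant of the Hessian matrix of `u` at `p`. -/
noncomputable def hessDet (u : ℝ × ℝ → ℝ) (p : ℝ × ℝ) : ℝ :=
  hess u (1, 0) (1, 0) p * hess u (0, 1) (0, 1) p -
    hess u (1, 0) (0, 1) p * hess u (0, 1) (1, 0) p

/-- The triple `(u_xx, u_xy, u_yy)` of second derivatives of `u` at `p`. -/
noncomputable def hessTriple (u : ℝ × ℝ → ℝ) (p : ℝ × ℝ) : ℝ × ℝ × ℝ :=
  (hess u (1, 0) (1, 0) p, hess u (1, 0) (0, 1) p, hess u (0, 1) (0, 1) p)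

/-- Euclidean dot product on `ℝ × ℝ`. -/
def dot (v w : ℝ × ℝ) : ℝ := v.1 * w.1 + v.2 * w.2

/-- Counterclockwise rotation by `π/2`. -/
def Jrot (v : ℝ × ℝ) : ℝ × ℝ := (-v.2, v.1)

/-- `Du : s → t` is an orientation-preserving (`C¹`) diffeomorphism from `s` onto `t`:
it is `C¹`, injective, has image `t`, has everywhere positive Jacobian determinant
(the determinant of the Hessian of `u`), and has a `C¹` inverse. -/
structure IsGradOPDiffeoOnto (u : ℝ × ℝ → ℝ) (s t : Set (ℝ × ℝ)) : Prop where
  contDiffOn : ContDiffOn ℝ 1 (grad u) s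
  injOn : Set.InjOn (grad u) s
  image_eq : grad u '' s = t
  jacPos : ∀ p ∈ s, 0 < hessDet u p
  inv : ∃ ginv : ℝ × ℝ → ℝ × ℝ, ContDiffOn ℝ 1 ginv t ∧ ∀ p ∈ s, ginv (grad u p) = p

/-! Unit speed forces `γ'' ⟂ γ'`, so in the plane `γ'' = κ ν` and `ν' = Jγ'' = -κ γ'`.
Differentiating the Neumann condition along `γ` gives `D²u(γ', ν) + ⟨Du, ν'⟩ = ⟨Dg(ν), ν'⟩`,
and `⟨Du, γ'⟩ = 0` because `u` vanishes on `γ`; substituting `ν' = -κ γ'` leaves the identity. -/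

theorem eq_of_hasDerivAt_of_eqOn {F : Type*} [NormedAddCommGroup F] [NormedSpace ℝ F]
    {f g : ℝ → F} {f' g' : F} {I : Set ℝ} {s : ℝ} (hI : IsOpen I) (hs : s ∈ I)
    (hfg : EqOn f g I) (hf : HasDerivAt f f' s) (hg : HasDerivAt g g' s) : f' = g' :=
  hf.unique (hg.congr_of_eventuallyEq (hfg.eventuallyEq_of_mem (hI.mem_nhds hs)))

theorem hasDerivAt_fderiv_comp_apply {E F : Type*} [NormedAddCommGroup E] [NormedSpace ℝ E]
    [NormedAddCommGroup F] [NormedSpace ℝ F] {u : E → F} {γ ν : ℝ → E} {γ' ν' : E} {s : ℝ}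
    (hu : ContDiffAt ℝ 2 u (γ s)) (hγ : HasDerivAt γ γ' s) (hν : HasDerivAt ν ν' s) :
    HasDerivAt (fun t => fderiv ℝ u (γ t) (ν t))
      (fderiv ℝ (fderiv ℝ u) (γ s) γ' (ν s) + fderiv ℝ u (γ s) ν') s := by
  have hDu : DifferentiableAt ℝ (fderiv ℝ u) (γ s) :=
    (hu.fderiv_right (m := 1) (by norm_num)).differentiableAt one_ne_zero
  exact (hDu.hasFDerivAt.comp_hasDerivAt s hγ).clm_apply hν

theorem dot_comm (v w : ℝ × ℝ) : dot v w = dot w v := by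
  unfold dot; ring

theorem dot_Jrot_Jrot (v : ℝ × ℝ) : dot (Jrot v) (Jrot v) = dot v v := by
  unfold dot Jrot; ring

theorem dot_grad (u : ℝ × ℝ → ℝ) (p w : ℝ × ℝ) : dot (grad u p) w = fderiv ℝ u p w := by
  have hw : w = w.1 • ((1 : ℝ), (0 : ℝ)) + w.2 • ((0 : ℝ), (1 : ℝ)) := by ext <;> simp
  conv_rhs => rw [hw, map_add, map_smul, map_smul]
  simp only [dot, grad, px, py, smul_eq_mul]
  ring

/-- `hess u v w` differentiates `D_v u` in the direction `w`, so matching `D²u(v, w)` needs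
the symmetry of second derivatives. -/
theorem hess_eq_fderiv_fderiv {u : ℝ × ℝ → ℝ} {p : ℝ × ℝ} (hu : ContDiffAt ℝ 2 u p)
    (v w : ℝ × ℝ) : hess u v w p = fderiv ℝ (fderiv ℝ u) p v w := by
  have hDu : DifferentiableAt ℝ (fderiv ℝ u) p :=
    (hu.fderiv_right (m := 1) (by norm_num)).differentiableAt one_ne_zero
  rw [hess, (hDu.hasFDerivAt.clm_apply (hasFDerivAt_const v p)).fderiv]
  simpa using (hu.isSymmSndFDerivAt (by simp)).eq w v

theorem HasDerivAt.dot {f g : ℝ → ℝ × ℝ} {f' g' : ℝ × ℝ} {s : ℝ} (hf : HasDerivAt f f' s)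
    (hg : HasDerivAt g g' s) :
    HasDerivAt (fun t => dot (f t) (g t)) (dot f' (g s) + dot (f s) g') s := by
  have hf₁ := hasFDerivAt_fst.comp_hasDerivAt s hf
  have hf₂ := hasFDerivAt_snd.comp_hasDerivAt s hf
  have hg₁ := hasFDerivAt_fst.comp_hasDerivAt s hg
  have hg₂ := hasFDerivAt_snd.comp_hasDerivAt s hg
  refine ((hf₁.mul hg₁).add (hf₂.mul hg₂)).congr_deriv ?_
  simp only [_root_.dot, Function.comp_apply, ContinuousLinearMap.coe_fst',
    ContinuousLinearMap.coe_snd']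
  ring

theorem HasDerivAt.Jrot {f : ℝ → ℝ × ℝ} {f' : ℝ × ℝ} {s : ℝ} (hf : HasDerivAt f f' s) :
    HasDerivAt (fun t => Jrot (f t)) (Jrot f') s :=
  (hasFDerivAt_snd.comp_hasDerivAt s hf).neg.prodMk (hasFDerivAt_fst.comp_hasDerivAt s hf)

theorem Jrot_eq_neg_smul_of_dot_eq_zero {a v : ℝ × ℝ} (hv : dot v v = 1) (ha : dot a v = 0) :
    Jrot a = -dot a (Jrot v) • v := by
  simp only [dot, Jrot] at *
  ext <;> simp only [smul_eq_mul, Prod.smul_fst, Prod.smul_snd]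
  · linear_combination a.2 * hv - v.2 * ha
  · linear_combination v.1 * ha - a.1 * hv

theorem dot_eq_zero_of_hasDerivAt_of_dot_self_eq_one {f : ℝ → ℝ × ℝ} {f' : ℝ × ℝ} {I : Set ℝ}
    {s : ℝ} (hI : IsOpen I) (hs : s ∈ I) (hunit : ∀ t ∈ I, dot (f t) (f t) = 1)
    (hf : HasDerivAt f f' s) : dot f' (f s) = 0 := by
  have h := eq_of_hasDerivAt_of_eqOn hI hs (fun t ht => hunit t ht) (hf.dot hf)
    (hasDerivAt_const s 1)
  rw [dot_comm (f s) f'] at h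
  linarith

theorem hasDerivAt_Jrot_of_dot_self_eq_one {f : ℝ → ℝ × ℝ} {f' : ℝ × ℝ} {I : Set ℝ} {s : ℝ}
    (hI : IsOpen I) (hs : s ∈ I) (hunit : ∀ t ∈ I, dot (f t) (f t) = 1)
    (hf : HasDerivAt f f' s) :
    HasDerivAt (fun t => Jrot (f t)) (-dot f' (Jrot (f s)) • f s) s := by
  rw [← Jrot_eq_neg_smul_of_dot_eq_zero (hunit s hs)
    (dot_eq_zero_of_hasDerivAt_of_dot_self_eq_one hI hs hunit hf)]
  exact hf.Jrot

/-- Differentiating the Neumann condition `⟨Du, ν⟩ = g(ν)` along a level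
curve yields `D²u(γ', ν) = -κ ⟨Dg(ν), γ'⟩`, where `ν = Jγ'` and `κ = ⟨γ'', ν⟩`. -/
theorem neumann_derivative_identity
    (Ω : Set (ℝ × ℝ)) (hΩ : IsOpen Ω)
    (u : ℝ × ℝ → ℝ) (hu : ContDiffOn ℝ 2 u Ω)
    (I : Set ℝ) (hI : IsOpen I)
    (γ : ℝ → ℝ × ℝ) (hγ : ContDiffOn ℝ 2 γ I) (hγΩ : ∀ s ∈ I, γ s ∈ Ω)
    (harc : ∀ s ∈ I, dot (deriv γ s) (deriv γ s) = 1)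
    (hzero : ∀ s ∈ I, u (γ s) = 0)
    (g : ℝ × ℝ → ℝ) (Ug : Set (ℝ × ℝ)) (hUg : IsOpen Ug)
    (hUg1 : {w : ℝ × ℝ | dot w w = 1} ⊆ Ug) (hg : ContDiffOn ℝ 1 g Ug)
    (hNeu : ∀ s ∈ I, dot (grad u (γ s)) (Jrot (deriv γ s)) = g (Jrot (deriv γ s))) :
    ∀ s ∈ I, hess u (deriv γ s) (Jrot (deriv γ s)) (γ s) =
      -(dot (deriv (deriv γ) s) (Jrot (deriv γ s))) *
        dot (grad g (Jrot (deriv γ s))) (deriv γ s) := by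
  intro s hs
  have huγ : ContDiffAt ℝ 2 u (γ s) := hu.contDiffAt (hΩ.mem_nhds (hγΩ s hs))
  have hγ' : HasDerivAt γ (deriv γ s) s :=
    ((hγ.contDiffAt (hI.mem_nhds hs)).differentiableAt two_ne_zero).hasDerivAt
  have hγ'' : HasDerivAt (deriv γ) (deriv (deriv γ) s) s :=
    (((hγ.deriv_of_isOpen hI (m := 1) (by norm_num)).contDiffAt (hI.mem_nhds hs)).differentiableAt
      one_ne_zero).hasDerivAt
  have hν := hasDerivAt_Jrot_of_dot_self_eq_one hI hs harc hγ''
  have hνUg : Jrot (deriv γ s) ∈ Ug :=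
    hUg1 ((dot_Jrot_Jrot (deriv γ s)).trans (harc s hs))
  have hg' : HasFDerivAt g (fderiv ℝ g (Jrot (deriv γ s))) (Jrot (deriv γ s)) :=
    ((hg.contDiffAt (hUg.mem_nhds hνUg)).differentiableAt one_ne_zero).hasFDerivAt
  have hDu_tangent : fderiv ℝ u (γ s) (deriv γ s) = 0 :=
    eq_of_hasDerivAt_of_eqOn hI hs (fun t ht => hzero t ht)
      ((huγ.differentiableAt two_ne_zero).hasFDerivAt.comp_hasDerivAt s hγ')
      (hasDerivAt_const s 0)
  have hNeu' := eq_of_hasDerivAt_of_eqOn hI hs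
    (fun t ht => (dot_grad u (γ t) _).symm.trans (hNeu t ht))
    (hasDerivAt_fderiv_comp_apply huγ hγ' hν) (hg'.comp_hasDerivAt s hν)
  rw [map_smul, map_smul, hDu_tangent, smul_eq_mul, smul_eq_mul, ← dot_grad] at hNeu'
  rw [hess_eq_fderiv_fderiv huγ]
  linarith
end

section
/- Let h be a nonzero harmonic homogeneous polynomial of degree n ≥ 3 in two real variables. Then the determinant of the Hessian of h is negative away from the origin: det(D²h)(q) = −(h_{xx}(q)² + h_{xy}(q)²) < 0 for every q ∈ ℝ², q ≠ (0,0). -/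
/-! If the gradient of a harmonic homogeneous polynomial `p` of positive degree in two variables
vanishes at `v ≠ 0`, Euler's identity for `p_x` and `p_y`, together with `p_yy = -p_xx` and
`p_xy = p_yx`, says that `∇p_x(v)` is orthogonal both to `v` and to its rotation by a right angle,
so `∇p_x(v) = 0`. By induction on the degree `p_x = 0`, and then harmonicity and Euler's identity
force `p = 0`. Applied to `p = h_x` this gives `(h_xx, h_xy)(q) ≠ 0`, while harmonicity turns the
Hessian determinant into `-(h_xx² + h_xy²)`. -/

open MvPolynomial

namespace MvPolynomial

theorem pderiv_pderiv_comm {R σ : Type*} [CommSemiring R] (i j : σ) (p : MvPolynomial σ R) :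
    pderiv i (pderiv j p) = pderiv j (pderiv i p) := by
  classical
  induction p using MvPolynomial.induction_on with
  | C a => simp
  | add p q hp hq => simp [hp, hq]
  | mul_X p k ih =>
    simp only [Derivation.leibniz, pderiv_X, Pi.single_apply, apply_ite (pderiv _),
      Derivation.map_one_eq_zero, map_zero, ite_self, map_add, smul_eq_mul, ih]
    ring

section Homogeneous

variable {R σ : Type*}

theorem IsHomogeneous.sum_eval_mul_pderiv [CommSemiring R] [Fintype σ] {p : MvPolynomial σ R}
    {n : ℕ} (hp : p.IsHomogeneous n) (v : σ → R) :
    ∑ i, v i * eval v (pderiv i p) = n * eval v p := by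
  simpa using congrArg (eval v) hp.sum_X_mul_pderiv

theorem IsHomogeneous.eq_zero_of_eval_eq_zero [CommSemiring R] {p : MvPolynomial σ R}
    (hp : p.IsHomogeneous 0) {v : σ → R} (h : eval v p = 0) : p = 0 := by
  rw [← totalDegree_zero_iff_isHomogeneous, totalDegree_eq_zero_iff_eq_C] at hp
  rw [hp, eval_C] at h
  rw [hp, h, map_zero]

theorem IsHomogeneous.eq_zero_of_forall_pderiv_eq_zero [CommRing R] [IsDomain R] [CharZero R]
    [Fintype σ] {p : MvPolynomial σ R} {n : ℕ} (hp : p.IsHomogeneous (n + 1))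
    (h : ∀ i, pderiv i p = 0) : p = 0 := by
  have := hp.sum_X_mul_pderiv
  simp only [h, mul_zero, Finset.sum_const_zero] at this
  exact (smul_eq_zero.mp this.symm).resolve_left n.succ_ne_zero

end Homogeneous

def IsHarmonic {R : Type*} [CommRing R] (p : MvPolynomial (Fin 2) R) : Prop :=
  pderiv 0 (pderiv 0 p) + pderiv 1 (pderiv 1 p) = 0

namespace IsHarmonic

variable {R : Type*} [CommRing R] {p : MvPolynomial (Fin 2) R}

theorem pderiv_one_pderiv_one (hp : IsHarmonic p) :
    pderiv 1 (pderiv 1 p) = -pderiv 0 (pderiv 0 p) :=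
  eq_neg_of_add_eq_zero_right hp

protected theorem pderiv (hp : IsHarmonic p) (i : Fin 2) : IsHarmonic (pderiv i p) := by
  unfold IsHarmonic
  rw [pderiv_pderiv_comm 0 i, pderiv_pderiv_comm 0 i, pderiv_pderiv_comm 1 i,
    pderiv_pderiv_comm 1 i, ← map_add, hp, map_zero]

theorem eq_zero_of_pderiv_zero_eq_zero [IsDomain R] [CharZero R] (hp : IsHarmonic p) {m : ℕ}
    (hhom : p.IsHomogeneous (m + 2)) (h : pderiv 0 p = 0) : p = 0 := by
  have hy : pderiv 1 p = 0 := by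
    refine (hhom.pderiv (i := 1)).eq_zero_of_forall_pderiv_eq_zero
      (Fin.forall_fin_two.mpr ⟨?_, ?_⟩)
    · rw [pderiv_pderiv_comm, h, map_zero]
    · rw [hp.pderiv_one_pderiv_one, h, map_zero, neg_zero]
  exact hhom.eq_zero_of_forall_pderiv_eq_zero (Fin.forall_fin_two.mpr ⟨h, hy⟩)

variable {p : MvPolynomial (Fin 2) ℝ} {v : Fin 2 → ℝ}

theorem hessian_eval_eq_zero (hp : IsHarmonic p) {m : ℕ} (hhom : p.IsHomogeneous (m + 2))
    (hv : v ≠ 0) (h0 : eval v (pderiv 0 p) = 0) (h1 : eval v (pderiv 1 p) = 0) :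
    eval v (pderiv 0 (pderiv 0 p)) = 0 ∧ eval v (pderiv 1 (pderiv 0 p)) = 0 := by
  have hx := (hhom.pderiv (i := 0)).sum_eval_mul_pderiv v
  have hy := (hhom.pderiv (i := 1)).sum_eval_mul_pderiv v
  rw [Fin.sum_univ_two, h0, mul_zero] at hx
  rw [Fin.sum_univ_two, h1, mul_zero, pderiv_pderiv_comm 0 1, hp.pderiv_one_pderiv_one,
    map_neg] at hy
  have hv2 : v 0 * v 0 + v 1 * v 1 ≠ 0 := by
    contrapose! hv
    ext i
    fin_cases i
    exacts [(mul_self_add_mul_self_eq_zero.mp hv).1, (mul_self_add_mul_self_eq_zero.mp hv).2]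
  constructor
  · refine (mul_eq_zero.mp ?_).resolve_left hv2
    linear_combination v 0 * hx - v 1 * hy
  · refine (mul_eq_zero.mp ?_).resolve_left hv2
    linear_combination v 1 * hx + v 0 * hy

theorem eq_zero_of_eval_pderiv_eq_zero (hp : IsHarmonic p) {m : ℕ}
    (hhom : p.IsHomogeneous (m + 1)) (hv : v ≠ 0) (h0 : eval v (pderiv 0 p) = 0)
    (h1 : eval v (pderiv 1 p) = 0) : p = 0 := by
  induction m generalizing p with
  | zero =>
    exact hhom.eq_zero_of_forall_pderiv_eq_zero (Fin.forall_fin_two.mpr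
      ⟨hhom.pderiv.eq_zero_of_eval_eq_zero h0, hhom.pderiv.eq_zero_of_eval_eq_zero h1⟩)
  | succ m ih =>
    obtain ⟨hxx, hxy⟩ := hp.hessian_eval_eq_zero hhom hv h0 h1
    exact hp.eq_zero_of_pderiv_zero_eq_zero hhom (ih (hp.pderiv 0) hhom.pderiv hxx hxy)

end IsHarmonic

end MvPolynomial

/-- For a nonzero harmonic homogeneous polynomial `h` of degree `n ≥ 3`
in two variables, the Hessian determinant is `-(h_xx² + h_xy²)`, and it is negative away
from the origin. -/
theorem hessian_det_of_harmonic_homogeneous_neg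
    (n : ℕ) (hn : 3 ≤ n) (h : MvPolynomial (Fin 2) ℝ) (hne : h ≠ 0)
    (hhom : h.IsHomogeneous n)
    (hharm : pderiv 0 (pderiv 0 h) + pderiv 1 (pderiv 1 h) = 0) :
    ∀ q : ℝ × ℝ, q ≠ 0 →
      (eval ![q.1, q.2] (pderiv 0 (pderiv 0 h)) * eval ![q.1, q.2] (pderiv 1 (pderiv 1 h)) -
        eval ![q.1, q.2] (pderiv 1 (pderiv 0 h)) * eval ![q.1, q.2] (pderiv 0 (pderiv 1 h)) =
        -((eval ![q.1, q.2] (pderiv 0 (pderiv 0 h))) ^ 2 +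
          (eval ![q.1, q.2] (pderiv 1 (pderiv 0 h))) ^ 2)) ∧
      eval ![q.1, q.2] (pderiv 0 (pderiv 0 h)) * eval ![q.1, q.2] (pderiv 1 (pderiv 1 h)) -
        eval ![q.1, q.2] (pderiv 1 (pderiv 0 h)) * eval ![q.1, q.2] (pderiv 0 (pderiv 1 h)) < 0 := by
  intro q hq
  have hharm : h.IsHarmonic := hharm
  have hv : ![q.1, q.2] ≠ 0 := fun hv => hq (Prod.ext (congrFun hv 0) (congrFun hv 1))
  have hess : eval ![q.1, q.2] (pderiv 0 (pderiv 0 h)) ≠ 0 ∨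
      eval ![q.1, q.2] (pderiv 1 (pderiv 0 h)) ≠ 0 := by
    by_contra! hzero
    obtain ⟨m, rfl⟩ : ∃ m, n = m + 3 := ⟨n - 3, by omega⟩
    exact hne (hharm.eq_zero_of_pderiv_zero_eq_zero hhom
      ((hharm.pderiv 0).eq_zero_of_eval_pderiv_eq_zero hhom.pderiv hv hzero.1 hzero.2))
  rw [hharm.pderiv_one_pderiv_one, pderiv_pderiv_comm 0 1, map_neg]
  set a := eval ![q.1, q.2] (pderiv 0 (pderiv 0 h))
  set c := eval ![q.1, q.2] (pderiv 1 (pderiv 0 h))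
  refine ⟨by ring, ?_⟩
  obtain ha | hc := hess
  · nlinarith [sq_pos_of_ne_zero ha, sq_nonneg c]
  · nlinarith [sq_pos_of_ne_zero hc, sq_nonneg a]
end
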